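/- arXiv:2403.12165 — 2 statements merged into one kernel-verified Lean document; each statement's English description precedes it below -/
import Mathlib

section
/- Let a finite group H act transitively on a finite set X, and let H be a subgroup of a group G acting on X. Then for any element g ∈ G, the average number of fixed points of elements in the coset gH equals 1, i.e., (1/|H|) · Σ_{a ∈ gH} |Fix(a)| = 1. -/
/-- Coset Burnside's Lemma: if a subgroup `H` of `G` acts transitively on a finite
nonempty set `X`, then for any `g : G` the average number of fixed points over the
coset `gH` equals `1`, i.e. `∑_{a ∈ gH} |Fix(a)| = |H|`. -/
theorem coset_burnside {G X : Type*} [Group G] [MulAction G X] [Fintype X] [Nonempty X]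
    (H : Subgroup G) [Fintype H]
    (htrans : ∀ x y : X, ∃ h : H, (h : G) • x = y) (g : G) :
    ∑ h : H, Nat.card {x : X // (g * (h : G)) • x = x} = Fintype.card H := by
  classical
  have hpre : MulAction.IsPretransitive H X := ⟨fun x y => htrans x y⟩
  -- per-x cardinality equality
  have key : ∀ x : X, Nat.card {h : H // (g * (h : G)) • x = x}
      = Nat.card {h : H // (h : G) • x = x} := by
    intro x
    obtain ⟨h₀, hh₀⟩ := htrans x (g⁻¹ • x)
    refine Nat.card_congr ⟨fun p => ⟨h₀⁻¹ * p.1, ?_⟩, fun p => ⟨h₀ * p.1, ?_⟩, ?_, ?_⟩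
    · obtain ⟨h, hh⟩ := p
      have hx : (h : G) • x = (h₀ : G) • x := by
        rw [hh₀]
        rw [mul_smul] at hh
        exact (eq_inv_smul_iff).mpr hh
      push_cast
      rw [mul_smul, hx, inv_smul_smul]
    · obtain ⟨h, hh⟩ := p
      push_cast
      rw [mul_smul, mul_smul, hh, hh₀, smul_inv_smul]
    · rintro ⟨h, hh⟩; simp
    · rintro ⟨h, hh⟩; simp
  calc ∑ h : H, Nat.card {x : X // (g * (h : G)) • x = x}
      = ∑ h : H, (Finset.univ.filter fun x : X => (g * (h : G)) • x = x).card := by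
        refine Finset.sum_congr rfl fun h _ => ?_
        rw [Nat.card_eq_fintype_card, Fintype.card_subtype]
    _ = ∑ x : X, (Finset.univ.filter fun h : H => (g * (h : G)) • x = x).card := by
        simp only [Finset.card_filter]
        rw [Finset.sum_comm]
    _ = ∑ x : X, (Finset.univ.filter fun h : H => (h : G) • x = x).card := by
        refine Finset.sum_congr rfl fun x _ => ?_
        have := key x
        rwa [Nat.card_eq_fintype_card, Nat.card_eq_fintype_card,
          Fintype.card_subtype, Fintype.card_subtype] at this
    _ = ∑ h : H, (Finset.univ.filter fun x : X => (h : G) • x = x).card := by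
        simp only [Finset.card_filter]
        rw [Finset.sum_comm]
    _ = ∑ h : H, Fintype.card (MulAction.fixedBy X (h : H)) := by
        refine Finset.sum_congr rfl fun h _ => ?_
        rw [Fintype.card_subtype]
        rfl
    _ = Fintype.card (MulAction.orbitRel.Quotient H X) * Fintype.card H :=
        MulAction.sum_card_fixedBy_eq_card_orbits_mul_card_group H X
    _ = Fintype.card H := by
        have : Subsingleton (MulAction.orbitRel.Quotient H X) :=
          (MulAction.pretransitive_iff_subsingleton_quotient H X).mp hpre
        obtain ⟨x⟩ := (inferInstance : Nonempty X)
        rw [Fintype.card_eq_one_iff_nonempty_unique.mpr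
          ⟨uniqueOfSubsingleton (Quotient.mk'' x)⟩, one_mul]
end

section
/- Let X* be the complete rooted d-ary tree and G ≤ Aut(X*) a closed subgroup with level quotients G_n acting on the n-th level X_n. Suppose for some n ≥ 1 the kernel H_n of the restriction map G_n → G_{n-1} fails to act transitively on the set of children v* of some vertex v ∈ X_{n-1} that lies in a G-orbit. Then the fixed-point process Y_1, Y_2, … on G (with Haar probability measure and Y_n(g) = |Fix of g on level n|) is not a martingale: there exist values t_1, …, t_{n-1} with positive probability such that E[Y_n | Y_1 = t_1, …, Y_{n-1} = t_{n-1}] ≠ t_{n-1}. -/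
/-!
Take `t k = d ^ k`. An element fixes all `d ^ k` vertices of every level `k ≤ n` exactly when
it lies in the kernel `H` of the action on level `n`, so the conditioning event is `H`. By
Burnside's lemma the sum of `Y_{n+1}` over `H` is `|H|` times the number of `H`-orbits on level
`n + 1`. Each orbit lies among the children of a single level-`n` vertex, and `H` is not
transitive on the children of `v`, so there are more than `d ^ n` orbits.
-/

open scoped Classical

open Function Finset

theorem Equiv.Perm.card_fixed_eq_card_iff {β : Type*} [Finite β] {σ : Equiv.Perm β} :
    Nat.card {b // σ b = b} = Nat.card β ↔ σ = 1 := by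
  refine ⟨fun h => ?_, fun h => by simp [h]⟩
  by_contra hσ
  obtain ⟨b, hb⟩ : ∃ b, σ b ≠ b := by simpa [Equiv.ext_iff] using hσ
  have := Fintype.ofFinite β
  simp only [Nat.card_eq_fintype_card] at h
  exact (Fintype.card_subtype_lt (p := fun b => σ b = b) hb).ne h

theorem MulAction.card_mul_card_lt_sum_card_fixedBy {G β γ : Type*} [Group G] [MulAction G β]
    [Fintype G] [Finite β] [Finite γ] (p : β → γ) (hp : Surjective p)
    (hinv : ∀ (g : G) (b : β), p (g • b) = p b) {b₁ b₂ : β} (hfib : p b₁ = p b₂)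
    (hsep : ∀ g : G, g • b₁ ≠ b₂) :
    Nat.card γ * Nat.card G < ∑ g : G, Nat.card (fixedBy β g) := by
  have := Fintype.ofFinite β
  let q : orbitRel.Quotient G β → γ := Quotient.lift p fun _ _ ⟨g, hg⟩ => hg ▸ hinv g _
  have hq : Surjective q := fun c => (hp c).imp' (⟦·⟧) fun _ hb => hb
  have hq' : ¬ Injective q := fun hinj => by
    obtain ⟨g, hg⟩ := Quotient.exact (hinj (a₁ := ⟦b₂⟧) (a₂ := ⟦b₁⟧) hfib.symm)
    exact hsep g hg
  have horbits : Nat.card γ < Nat.card (orbitRel.Quotient G β) := by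
    have := Fintype.ofFinite γ
    simpa only [Nat.card_eq_fintype_card] using Fintype.card_lt_of_surjective_not_injective q hq hq'
  simp only [Nat.card_eq_fintype_card] at horbits ⊢
  rw [sum_card_fixedBy_eq_card_orbits_mul_card_group]
  exact Nat.mul_lt_mul_of_pos_right horbits Fintype.card_pos

section TreeLevels

variable {α Γ : Type*} [Group Γ]

def RespectsTruncation (φ : ∀ k : ℕ, Γ →* Equiv.Perm (Fin k → α)) : Prop :=
  ∀ (k : ℕ) (g : Γ) (w : Fin (k + 1) → α),
    φ k g (w ∘ Fin.castSucc) = (φ (k + 1) g w) ∘ Fin.castSucc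

namespace RespectsTruncation

variable {φ : ∀ k : ℕ, Γ →* Equiv.Perm (Fin k → α)}

theorem comp_castSucc_of_mem_ker (hφ : RespectsTruncation φ) {n : ℕ} {g : Γ}
    (hg : g ∈ (φ n).ker) (w : Fin (n + 1) → α) :
    φ (n + 1) g w ∘ Fin.castSucc = w ∘ Fin.castSucc := by
  rw [← hφ, MonoidHom.mem_ker.mp hg, Equiv.Perm.one_apply]

theorem eq_one_of_succ_eq_one [Nonempty α] (hφ : RespectsTruncation φ) {k : ℕ} {g : Γ}
    (h : φ (k + 1) g = 1) : φ k g = 1 := by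
  ext u : 1
  obtain ⟨a⟩ := ‹Nonempty α›
  simpa [h, Fin.snoc_comp_castSucc] using hφ k g (Fin.snoc u a)

theorem eq_one_of_le [Nonempty α] (hφ : RespectsTruncation φ) {k j : ℕ} (hkj : k ≤ j) {g : Γ}
    (h : φ j g = 1) : φ k g = 1 := by
  induction j, hkj using Nat.le_induction with
  | base => exact h
  | succ j _ ih => exact ih (hφ.eq_one_of_succ_eq_one h)

theorem forall_card_fixed_eq_pow_iff [Finite α] [Nonempty α] (hφ : RespectsTruncation φ)
    {n : ℕ} {g : Γ} :
    (∀ k ∈ range (n + 1), Nat.card {w : Fin k → α // φ k g w = w} = Nat.card α ^ k) ↔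
      φ n g = 1 := by
  have card_level (k : ℕ) : Nat.card (Fin k → α) = Nat.card α ^ k := by simp [Nat.card_fun]
  simp_rw [← card_level, Equiv.Perm.card_fixed_eq_card_iff, mem_range, Nat.lt_succ_iff]
  exact ⟨fun h => h n le_rfl, fun h _ hk => hφ.eq_one_of_le hk h⟩

theorem pow_mul_card_ker_lt_sum_card_fixed [Fintype Γ] [Finite α] (hφ : RespectsTruncation φ)
    {n : ℕ} (v : Fin n → α) {x y : α}
    (hxy : ∀ g ∈ (φ n).ker, φ (n + 1) g (Fin.snoc v x) ≠ Fin.snoc v y) :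
    Nat.card α ^ n * Nat.card (φ n).ker <
      ∑ g : (φ n).ker, Nat.card {w : Fin (n + 1) → α // φ (n + 1) g w = w} := by
  let _ : MulAction (φ n).ker (Fin (n + 1) → α) :=
    MulAction.compHom _ ((φ (n + 1)).comp (φ n).ker.subtype)
  have := MulAction.card_mul_card_lt_sum_card_fixedBy (G := (φ n).ker) (· ∘ Fin.castSucc)
    (fun u => ⟨Fin.snoc u x, Fin.snoc_comp_castSucc⟩)
    (fun g w => hφ.comp_castSucc_of_mem_ker g.2 w)
    (b₁ := Fin.snoc v x) (b₂ := Fin.snoc v y)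
    (by simp only [Fin.snoc_comp_castSucc]) (fun g => hxy g g.2)
  rwa [Nat.card_fun, Nat.card_fin] at this

end RespectsTruncation

end TreeLevels

theorem not_martingale_of_kernel_not_transitive_general (d n : ℕ)
    {Γ : Type*} [Group Γ] [Fintype Γ]
    (φ : ∀ k : ℕ, Γ →* Equiv.Perm (Fin k → Fin d))
    (hcompat : ∀ (k : ℕ) (g : Γ) (w : Fin (k + 1) → Fin d),
      φ k g (w ∘ Fin.castSucc) = (φ (k + 1) g w) ∘ Fin.castSucc)
    (v : Fin n → Fin d)
    (hker : ¬ ∀ x y : Fin d, ∃ g : Γ, φ n g = 1 ∧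
      φ (n + 1) g (Fin.snoc v x) = Fin.snoc v y) :
    ∃ t : ℕ → ℕ,
      (Finset.univ.filter fun g : Γ =>
          ∀ k ∈ Finset.range (n + 1),
            Nat.card {w : Fin k → Fin d // φ k g w = w} = t k).Nonempty ∧
      ∑ g ∈ (Finset.univ.filter fun g : Γ =>
          ∀ k ∈ Finset.range (n + 1),
            Nat.card {w : Fin k → Fin d // φ k g w = w} = t k),
          Nat.card {w : Fin (n + 1) → Fin d // φ (n + 1) g w = w}
        ≠ t n * (Finset.univ.filter fun g : Γ =>
            ∀ k ∈ Finset.range (n + 1),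
              Nat.card {w : Fin k → Fin d // φ k g w = w} = t k).card := by
  obtain ⟨x, y, hxy⟩ : ∃ x y : Fin d, ∀ g ∈ (φ n).ker,
      φ (n + 1) g (Fin.snoc v x) ≠ Fin.snoc v y := by
    simpa only [not_forall, not_exists, not_and, MonoidHom.mem_ker] using hker
  have : Nonempty (Fin d) := ⟨x⟩
  have hφ : RespectsTruncation φ := hcompat
  have hevent : (univ.filter fun g : Γ => ∀ k ∈ range (n + 1),
      Nat.card {w : Fin k → Fin d // φ k g w = w} = d ^ k) = univ.filter (· ∈ (φ n).ker) := by
    ext g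
    simpa [Nat.card_fin] using hφ.forall_card_fixed_eq_pow_iff (g := g)
  refine ⟨(d ^ ·), ⟨1, by simp⟩, ?_⟩
  rw [hevent, sum_subtype (p := (· ∈ (φ n).ker)) (F := inferInstance) _ (fun _ => by simp),
    ← Fintype.card_subtype]
  have := (hφ.pow_mul_card_ker_lt_sum_card_fixed v hxy).ne'
  rw [Nat.card_fin, Nat.card_eq_fintype_card] at this
  convert this using 3

/-- Non-martingale criterion for groups acting on the `d`-ary rooted tree.
The tree levels are `X_k = Fin k → Fin d` (words of length `k`), the group `Γ` (a
finite quotient of a closed subgroup `G ≤ Aut(X*)` through which all the relevant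
level actions factor, with the uniform/Haar probability measure) acts on every level
through homomorphisms `φ k` compatible with truncation of words, and
`Y_k(g) = |Fix(φ k g)|` is the fixed-point process.  If the kernel of the restriction
`G_{n+1} → G_n` (elements acting trivially on level `n`) fails to act transitively on
the set of children `Fin.snoc v x` of some vertex `v` at level `n`, then the process
is not a martingale: there are values `t 0, …, t n` attained with positive probability
(the conditioning event is nonempty) such that the conditional expectation of
`Y_{n+1}` given `Y_k = t k` for `k ≤ n` differs from `t n`, i.e.
`∑_{g ∈ E} Y_{n+1}(g) ≠ t n · |E|` where `E = {g : Y_k(g) = t k for k ≤ n}`. -/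
theorem not_martingale_of_kernel_not_transitive (d n : ℕ) (hd : 2 ≤ d)
    {Γ : Type*} [Group Γ] [Fintype Γ]
    (φ : ∀ k : ℕ, Γ →* Equiv.Perm (Fin k → Fin d))
    (hcompat : ∀ (k : ℕ) (g : Γ) (w : Fin (k + 1) → Fin d),
      φ k g (w ∘ Fin.castSucc) = (φ (k + 1) g w) ∘ Fin.castSucc)
    (v : Fin n → Fin d)
    (hker : ¬ ∀ x y : Fin d, ∃ g : Γ, φ n g = 1 ∧
      φ (n + 1) g (Fin.snoc v x) = Fin.snoc v y) :
    ∃ t : ℕ → ℕ,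
      (Finset.univ.filter fun g : Γ =>
          ∀ k ∈ Finset.range (n + 1),
            Nat.card {w : Fin k → Fin d // φ k g w = w} = t k).Nonempty ∧
      ∑ g ∈ (Finset.univ.filter fun g : Γ =>
          ∀ k ∈ Finset.range (n + 1),
            Nat.card {w : Fin k → Fin d // φ k g w = w} = t k),
          Nat.card {w : Fin (n + 1) → Fin d // φ (n + 1) g w = w}
        ≠ t n * (Finset.univ.filter fun g : Γ =>
            ∀ k ∈ Finset.range (n + 1),
              Nat.card {w : Fin k → Fin d // φ k g w = w} = t k).card :=
  not_martingale_of_kernel_not_transitive_general d n φ hcompat v hker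
end
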